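/- Let G = G₀(u) ⋄ H(u) be a connected non-odd-bipartite k-uniform hypergraph (k even) with H odd-bipartite, and let x be a first eigenvector of G. Define β_H(x) = d_H(u) x_u^k + ∑_{e ∈ E_H(u)} ∏_{v∈e} x_v. Then β_H(x) ≤ 0; moreover if x_u ≠ 0 then β_H(x) < 0. -/

import Mathlib

open Finset

structure UHG (V : Type) [DecidableEq V] [Fintype V] (k : ℕ) where
  edges : Finset (Finset V)
  uniform : ∀ e ∈ edges, e.card = k

namespace UHG

variable {V : Type} [DecidableEq V] [Fintype V] {k : ℕ}

/-- The vertices of the hypergraph: all vertices covered by some edge. -/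
def verts (G : UHG V k) : Finset V := G.edges.biUnion id

/-- The set of edges containing a given vertex. -/
def incEdges (G : UHG V k) (v : V) : Finset (Finset V) :=
  G.edges.filter fun e => v ∈ e

/-- The degree of a vertex. -/
def deg (G : UHG V k) (v : V) : ℕ := (G.incEdges v).card

/-- Two vertices are adjacent if some edge contains both. -/
def Adj (G : UHG V k) (u v : V) : Prop := ∃ e ∈ G.edges, u ∈ e ∧ v ∈ e

/-- A hypergraph is connected if any two of its vertices are joined by a walk. -/
def Connected (G : UHG V k) : Prop :=
  G.verts.Nonempty ∧ ∀ u ∈ G.verts, ∀ v ∈ G.verts, Relation.ReflTransGen G.Adj u v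

/-- A hypergraph is odd-bipartite if there is a set `U` of vertices such that
every edge meets `U` in an odd number of vertices (the bipartition is `{U, V \ U}`). -/
def OddBipartite (G : UHG V k) : Prop :=
  ∃ U : Finset V, ∀ e ∈ G.edges, Odd (e ∩ U).card

/-- The signless Laplacian form `Q(G) x^k = ∑_{e ∈ E} (∑_{v∈e} x_v^k + k ∏_{v∈e} x_v)`. -/
def Qform (G : UHG V k) (x : V → ℝ) : ℝ :=
  ∑ e ∈ G.edges, ((∑ v ∈ e, x v ^ k) + (k : ℝ) * ∏ v ∈ e, x v)

/-- The H-eigenvector equation for the signless Laplacian tensor: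
`(λ - d(v)) x_v^{k-1} = ∑_{e ∋ v} ∏_{w ∈ e \ {v}} x_w` for every vertex `v`. -/
def eigenEq (G : UHG V k) (lam : ℝ) (x : V → ℝ) : Prop :=
  ∀ v : V, (lam - (G.deg v : ℝ)) * x v ^ (k - 1) =
    ∑ e ∈ G.incEdges v, ∏ w ∈ e.erase v, x w

/-- The least H-eigenvalue of the signless Laplacian tensor. -/
noncomputable def lamMin (G : UHG V k) : ℝ :=
  sInf {lam : ℝ | ∃ x : V → ℝ, x ≠ 0 ∧ G.eigenEq lam x}

/-- A first eigenvector: an H-eigenvector associated with the least H-eigenvalue. -/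
def IsFirstEigenvector (G : UHG V k) (x : V → ℝ) : Prop :=
  x ≠ 0 ∧ G.eigenEq G.lamMin x

/-- `G` is the coalescence `G₀(u) ⋄ H(u)`: its edges are the disjoint union of the
edges of `G₀` and `H`, which share only the vertex `u`. -/
def IsCoalescence (G G₀ H : UHG V k) (u : V) : Prop :=
  G.edges = G₀.edges ∪ H.edges ∧ Disjoint G₀.edges H.edges ∧
  G₀.verts ∩ H.verts ⊆ {u} ∧ u ∈ G₀.verts ∧ u ∈ H.verts

end UHG


/-!
Summing the eigen-equations of `x` over the vertices of `G₀` gives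
`λ ∑_{v ∈ G₀} x_v^k = Q(G₀) x^k + β_H(x)`. Let `y` agree with `x` on `G₀` and equal `x_u σ_v`
on `H`, where `σ` is the `±1` sign vector of an odd-bipartition of `H` with `σ_u = 1`. Every edge
of `H` then contributes `0` to `Q(G) y^k`, so `Q(G) y^k = Q(G₀) x^k`, while
`∑ y_v^k ≥ ∑_{v ∈ G₀} x_v^k + x_u^k` since `H` has a vertex outside `G₀`. The variational bound
`λ ∑ y_v^k ≤ Q(G) y^k` (a minimiser of `Q(G)` on the unit `k`-sphere is an eigenvector, by
Lagrange multipliers) yields `β_H(x) ≤ -λ x_u^k`. Finally `λ > 0`: an eigenvector for `0` of a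
connected hypergraph has constant modulus on the vertices and a negative product on every edge,
which makes `G` odd-bipartite.
-/

open Finset

theorem Finset.card_mul_prod_abs_le_sum_abs_pow {ι : Type*} (s : Finset ι) (f : ι → ℝ) :
    (#s : ℝ) * ∏ i ∈ s, |f i| ≤ ∑ i ∈ s, |f i| ^ #s := by
  rcases s.eq_empty_or_nonempty with rfl | hs
  · simp
  have hn : (#s : ℝ) ≠ 0 := Nat.cast_ne_zero.2 (card_ne_zero.2 hs)
  have hAM := Real.geom_mean_le_arith_mean_weighted s (fun _ => (#s : ℝ)⁻¹)
    (fun i => |f i| ^ #s) (fun _ _ => by positivity) (by simp [hn]) (fun _ _ => by positivity)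
  rw [prod_congr rfl fun i _ => Real.pow_rpow_inv_natCast (abs_nonneg (f i))
    (card_ne_zero.2 hs), ← mul_sum] at hAM
  calc (#s : ℝ) * ∏ i ∈ s, |f i| ≤ #s * ((#s : ℝ)⁻¹ * ∑ i ∈ s, |f i| ^ #s) := by gcongr
    _ = ∑ i ∈ s, |f i| ^ #s := by field_simp

theorem Finset.sum_pow_card_add_card_mul_prod_nonneg {ι : Type*} (s : Finset ι) (f : ι → ℝ)
    (hs : Even #s) : 0 ≤ ∑ i ∈ s, f i ^ #s + #s * ∏ i ∈ s, f i := by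
  have hAM := card_mul_prod_abs_le_sum_abs_pow s f
  rw [← abs_prod] at hAM
  simp only [hs.pow_abs] at hAM
  nlinarith [neg_abs_le (∏ i ∈ s, f i)]

theorem Finset.eq_of_prod_eq_pow_card {ι : Type*} [DecidableEq ι] {s : Finset ι} {f : ι → ℝ}
    {c : ℝ} (hc : 0 < c) (h0 : ∀ i ∈ s, 0 ≤ f i) (hle : ∀ i ∈ s, f i ≤ c)
    (hprod : ∏ i ∈ s, f i = c ^ #s) {i : ι} (hi : i ∈ s) : f i = c := by
  refine le_antisymm (hle i hi) (le_of_mul_le_mul_right ?_ (pow_pos hc (#s - 1)))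
  calc c * c ^ (#s - 1) = ∏ j ∈ s, f j := by
        rw [hprod, ← pow_succ', Nat.sub_add_cancel (card_pos.2 ⟨i, hi⟩)]
    _ = f i * ∏ j ∈ s.erase i, f j := (mul_prod_erase s f hi).symm
    _ ≤ f i * c ^ (#s - 1) := by
        rw [← card_erase_of_mem hi, ← prod_const]
        exact mul_le_mul_of_nonneg_left
          (prod_le_prod (fun j hj => h0 j (mem_of_mem_erase hj))
            fun j hj => hle j (mem_of_mem_erase hj)) (h0 i hi)

theorem Finset.prod_ite_neg_one {ι : Type*} (s : Finset ι) (p : ι → Prop) [DecidablePred p] :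
    ∏ i ∈ s, (if p i then (-1 : ℝ) else 1) = (-1) ^ #(s.filter p) := by
  rw [prod_ite, prod_const, prod_const_one, mul_one]

theorem Finset.odd_card_filter_neg_of_prod_neg {ι : Type*} {s : Finset ι} {f : ι → ℝ}
    (h : ∏ i ∈ s, f i < 0) : Odd #(s.filter fun i => f i < 0) := by
  have hsign : ∏ i ∈ s, f i = (-1) ^ #(s.filter fun i => f i < 0) * ∏ i ∈ s, |f i| := by
    rw [← prod_ite_neg_one, ← prod_mul_distrib]
    refine prod_congr rfl fun i _ => ?_
    split_ifs with hi
    · rw [abs_of_neg hi, neg_one_mul, neg_neg]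
    · rw [abs_of_nonneg (not_lt.1 hi), one_mul]
  by_contra hodd
  rw [hsign, (Nat.not_odd_iff_even.1 hodd).neg_one_pow, one_mul] at h
  exact (prod_nonneg fun i _ => abs_nonneg (f i)).not_gt h

theorem isCompact_sum_pow_eq_one {ι : Type*} [Fintype ι] {k : ℕ} (hk : Even k) (hk0 : 0 < k) :
    IsCompact {z : ι → ℝ | ∑ i, z i ^ k = 1} := by
  refine (isCompact_closedBall (0 : ι → ℝ) 1).of_isClosed_subset
    (isClosed_eq (by fun_prop) continuous_const) fun z hz => ?_
  rw [mem_closedBall_zero_iff, pi_norm_le_iff_of_nonneg zero_le_one]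
  intro v
  rw [Real.norm_eq_abs, ← pow_le_one_iff_of_nonneg (abs_nonneg _) hk0.ne', hk.pow_abs]
  exact (hz : ∑ i, z i ^ k = 1) ▸ single_le_sum (fun i _ => hk.pow_nonneg (z i)) (mem_univ v)

namespace UHG

variable {V : Type} [DecidableEq V] [Fintype V] {k : ℕ}

def beta (H : UHG V k) (u : V) (x : V → ℝ) : ℝ :=
  H.deg u * x u ^ k + ∑ e ∈ H.incEdges u, ∏ v ∈ e, x v

lemma mem_verts_of_mem {G : UHG V k} {e : Finset V} {v : V} (he : e ∈ G.edges) (hv : v ∈ e) :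
    v ∈ G.verts :=
  mem_biUnion.2 ⟨e, he, hv⟩

lemma mem_incEdges {G : UHG V k} {v : V} {e : Finset V} :
    e ∈ G.incEdges v ↔ e ∈ G.edges ∧ v ∈ e :=
  mem_filter

section Qform

lemma Qform_nonneg (hk : Even k) (G : UHG V k) (x : V → ℝ) : 0 ≤ G.Qform x :=
  sum_nonneg fun e he => G.uniform e he ▸ sum_pow_card_add_card_mul_prod_nonneg e x
    ((G.uniform e he).symm ▸ hk)

lemma Qform_congr {G : UHG V k} {x y : V → ℝ} (h : ∀ v ∈ G.verts, x v = y v) :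
    G.Qform x = G.Qform y :=
  sum_congr rfl fun e he => by
    rw [sum_congr rfl fun v hv => by rw [h v (mem_verts_of_mem he hv)],
      prod_congr rfl fun v hv => h v (mem_verts_of_mem he hv)]

lemma Qform_smul (G : UHG V k) (t : ℝ) (x : V → ℝ) :
    G.Qform (fun v => t * x v) = t ^ k * G.Qform x := by
  rw [Qform, Qform, mul_sum]
  refine sum_congr rfl fun e he => ?_
  simp only [mul_pow, prod_mul_distrib, prod_const, G.uniform e he, ← mul_sum]
  ring

lemma Qform_eq_add_of_edges_eq_union {G G₁ G₂ : UHG V k} (hE : G.edges = G₁.edges ∪ G₂.edges)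
    (hdisj : Disjoint G₁.edges G₂.edges) (x : V → ℝ) :
    G.Qform x = G₁.Qform x + G₂.Qform x := by
  rw [Qform, hE, sum_union hdisj, Qform, Qform]

lemma continuous_Qform (G : UHG V k) : Continuous G.Qform := by
  unfold Qform
  fun_prop

end Qform

section Eigen

variable {G : UHG V k} {lam : ℝ} {x : V → ℝ}

lemma eigenEq.sub_deg_mul_pow (hk0 : 0 < k) (h : G.eigenEq lam x) (v : V) :
    (lam - G.deg v) * x v ^ k = ∑ e ∈ G.incEdges v, ∏ w ∈ e, x w :=
  calc (lam - G.deg v) * x v ^ k = (lam - G.deg v) * x v ^ (k - 1) * x v := by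
        rw [mul_assoc, ← pow_succ, Nat.sub_add_cancel hk0]
    _ = ∑ e ∈ G.incEdges v, (∏ w ∈ e.erase v, x w) * x v := by rw [h v, sum_mul]
    _ = ∑ e ∈ G.incEdges v, ∏ w ∈ e, x w :=
        sum_congr rfl fun e he => prod_erase_mul _ _ (mem_incEdges.1 he).2

lemma eigenEq.mul_sum_pow (hk0 : 0 < k) (h : G.eigenEq lam x) (A : Finset V) :
    lam * ∑ v ∈ A, x v ^ k =
      ∑ e ∈ G.edges, (∑ v ∈ A ∩ e, x v ^ k + #(A ∩ e) * ∏ w ∈ e, x w) := by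
  have hv : ∀ v, lam * x v ^ k = ∑ e ∈ G.incEdges v, (x v ^ k + ∏ w ∈ e, x w) := fun v => by
    rw [sum_add_distrib, sum_const, nsmul_eq_mul, ← h.sub_deg_mul_pow hk0 v, deg]
    ring
  calc lam * ∑ v ∈ A, x v ^ k
      = ∑ v ∈ A, ∑ e ∈ G.edges, if v ∈ e then x v ^ k + ∏ w ∈ e, x w else 0 := by
        rw [mul_sum]
        exact sum_congr rfl fun v _ => by rw [hv, incEdges, sum_filter]
    _ = ∑ e ∈ G.edges, ∑ v ∈ A ∩ e, (x v ^ k + ∏ w ∈ e, x w) := by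
        rw [sum_comm]
        exact sum_congr rfl fun e _ => by rw [← sum_filter, filter_mem_eq_inter]
    _ = _ := by simp only [sum_add_distrib, sum_const, nsmul_eq_mul]

lemma eigenEq.mul_sum_pow_eq_Qform (hk0 : 0 < k) (h : G.eigenEq lam x) :
    lam * ∑ v, x v ^ k = G.Qform x := by
  rw [h.mul_sum_pow hk0 univ]
  exact sum_congr rfl fun e he => by rw [univ_inter, G.uniform e he]

lemma eigenEq.nonneg (hk : Even k) (hk0 : 0 < k) (hx : x ≠ 0) (h : G.eigenEq lam x) :
    0 ≤ lam := by
  obtain ⟨v, hv⟩ := Function.ne_iff.1 hx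
  have hpos : 0 < ∑ w, x w ^ k :=
    sum_pos' (fun w _ => hk.pow_nonneg _) ⟨v, mem_univ v, hk.pow_pos hv⟩
  exact nonneg_of_mul_nonneg_left ((h.mul_sum_pow_eq_Qform hk0).symm ▸ G.Qform_nonneg hk x) hpos

lemma lamMin_le (hk : Even k) (hk0 : 0 < k) (hx : x ≠ 0) (h : G.eigenEq lam x) :
    G.lamMin ≤ lam :=
  csInf_le ⟨0, fun _ ⟨_, hy, hey⟩ => hey.nonneg hk hk0 hy⟩ ⟨x, hx, h⟩

end Eigen

section Rayleigh

lemma exists_hasStrictFDerivAt_sum_pow (z : V → ℝ) :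
    ∃ L : (V → ℝ) →L[ℝ] ℝ, HasStrictFDerivAt (fun z : V → ℝ => ∑ v, z v ^ k) L z ∧
      ∀ v, L (Pi.single v 1) = k * z v ^ (k - 1) := by
  have hpow v := (hasStrictDerivAt_pow k (z v)).comp_hasStrictFDerivAt z
    (hasStrictFDerivAt_apply (𝕜 := ℝ) v z)
  exact ⟨_, HasStrictFDerivAt.fun_sum fun v _ => hpow v,
    fun v => by simp [_root_.sum_apply, Pi.single_apply]⟩

lemma exists_hasStrictFDerivAt_Qform (G : UHG V k) (z : V → ℝ) :
    ∃ L : (V → ℝ) →L[ℝ] ℝ, HasStrictFDerivAt G.Qform L z ∧ ∀ v, L (Pi.single v 1) =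
      k * (G.deg v * z v ^ (k - 1) + ∑ e ∈ G.incEdges v, ∏ w ∈ e.erase v, z w) := by
  have hpow v := (hasStrictDerivAt_pow k (z v)).comp_hasStrictFDerivAt z
    (hasStrictFDerivAt_apply (𝕜 := ℝ) v z)
  have hprod e := (HasStrictFDerivAt.finsetProd (u := e) fun w _ =>
    hasStrictFDerivAt_apply (𝕜 := ℝ) w z).const_mul (k : ℝ)
  refine ⟨_, HasStrictFDerivAt.fun_sum fun e _ =>
    (HasStrictFDerivAt.fun_sum fun v _ => hpow v).add (hprod e), fun v => ?_⟩
  simp only [_root_.sum_apply, add_apply, smul_apply, smul_eq_mul,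
    ContinuousLinearMap.proj_apply, Pi.single_apply, mul_ite, mul_one, mul_zero, sum_ite_eq']
  rw [sum_add_distrib, ← sum_filter, ← sum_filter, sum_const, nsmul_eq_mul, ← mul_sum]
  simp only [deg, incEdges]
  ring

lemma eigenEq_Qform_of_isMinOn (hk0 : 0 < k) (G : UHG V k) {z : V → ℝ}
    (hz : ∑ v, z v ^ k = 1) (hmin : IsMinOn G.Qform {z : V → ℝ | ∑ v, z v ^ k = 1} z) :
    G.eigenEq (G.Qform z) z := by
  obtain ⟨N', hN, hN'⟩ := exists_hasStrictFDerivAt_sum_pow (k := k) z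
  obtain ⟨Q', hQ, hQ'⟩ := G.exists_hasStrictFDerivAt_Qform z
  have hextr : IsLocalExtrOn G.Qform {y | ∑ v, y v ^ k = ∑ v, z v ^ k} z := by
    rw [hz]
    exact Or.inl hmin.localize
  obtain ⟨a, b, hab, hmul⟩ := hextr.exists_multipliers_of_hasStrictFDerivAt_1d hN hQ
  have hcoord v : a * z v ^ (k - 1) +
      b * (G.deg v * z v ^ (k - 1) + ∑ e ∈ G.incEdges v, ∏ w ∈ e.erase v, z w) = 0 := by
    have h := congr($hmul (Pi.single v 1))
    simp only [add_apply, smul_apply, hN', hQ', zero_apply, smul_eq_mul] at h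
    apply mul_left_cancel₀ (Nat.cast_ne_zero.2 hk0.ne' : (k : ℝ) ≠ 0)
    linear_combination h
  have hb : b ≠ 0 := by
    rintro rfl
    have ha : a ≠ 0 := fun ha => hab (by rw [ha]; rfl)
    have hz0 v : z v = 0 := eq_zero_of_pow_eq_zero (n := k - 1) <| by simpa [ha] using hcoord v
    simp [hz0, zero_pow hk0.ne'] at hz
  have heig : G.eigenEq (-a / b) z := fun v => by
    field_simp
    linear_combination -hcoord v
  have hQz := heig.mul_sum_pow_eq_Qform hk0
  rw [hz, mul_one] at hQz
  exact hQz ▸ heig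

theorem lamMin_mul_sum_pow_le_Qform (hk : Even k) (hk0 : 0 < k) (G : UHG V k) (y : V → ℝ) :
    G.lamMin * ∑ v, y v ^ k ≤ G.Qform y := by
  rcases (sum_nonneg fun v _ => hk.pow_nonneg (y v)).eq_or_lt with hy | hy
  · rw [← hy, mul_zero]
    exact G.Qform_nonneg hk y
  obtain ⟨v₀, -, -⟩ := exists_ne_zero_of_sum_ne_zero hy.ne'
  have hsphere : {z : V → ℝ | ∑ v, z v ^ k = 1}.Nonempty :=
    ⟨Pi.single v₀ 1, by simp [Pi.single_apply, zero_pow hk0.ne']⟩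
  obtain ⟨z, hz, hmin⟩ := (isCompact_sum_pow_eq_one hk hk0).exists_isMinOn hsphere
    G.continuous_Qform.continuousOn
  have hz0 : z ≠ 0 := by
    rintro rfl
    simp [zero_pow hk0.ne'] at hz
  set c := (∑ v, y v ^ k) ^ ((k : ℝ)⁻¹)
  have hc : c ^ k = ∑ v, y v ^ k := Real.rpow_inv_natCast_pow hy.le hk0.ne'
  have hyc : ∑ v, (c⁻¹ * y v) ^ k = 1 := by
    simp_rw [mul_pow, ← mul_sum, inv_pow, hc]
    exact inv_mul_cancel₀ hy.ne'
  calc G.lamMin * ∑ v, y v ^ k ≤ G.Qform z * ∑ v, y v ^ k := by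
        gcongr
        exact lamMin_le hk hk0 hz0 (G.eigenEq_Qform_of_isMinOn hk0 hz hmin)
    _ ≤ G.Qform (fun v => c⁻¹ * y v) * ∑ v, y v ^ k := by
        gcongr
        exact hmin hyc
    _ = G.Qform y := by
        rw [Qform_smul, inv_pow, hc]
        field_simp

end Rayleigh

section OddBipartite

variable {G : UHG V k} {x : V → ℝ} {c : ℝ}

lemma prod_abs_le_pow (hc : ∀ w ∈ G.verts, |x w| ≤ c) {e : Finset V} (he : e ∈ G.edges) :
    ∏ w ∈ e, |x w| ≤ c ^ k := by
  rw [← G.uniform e he, ← prod_const]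
  exact prod_le_prod (fun w _ => abs_nonneg _) fun w hw => hc w (mem_verts_of_mem he hw)

/-- At a vertex where `|x|` is maximal the eigen-equation for `0` reads
`-d(v) c^k = ∑_{e ∋ v} ∏_{w ∈ e} x_w`, a sum of `d(v)` terms each `≥ -c^k`. -/
lemma eigenEq.prod_eq_neg_pow (hk : Even k) (hk0 : 0 < k) (h : G.eigenEq 0 x)
    (hc : ∀ w ∈ G.verts, |x w| ≤ c) {v : V} (hv : |x v| = c) {e : Finset V}
    (he : e ∈ G.incEdges v) : ∏ w ∈ e, x w = -c ^ k := by
  have hle : ∀ f ∈ G.incEdges v, -c ^ k ≤ ∏ w ∈ f, x w := fun f hf =>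
    neg_le_of_abs_le ((abs_prod _ _).trans_le (prod_abs_le_pow hc (mem_incEdges.1 hf).1))
  have hsum : ∑ f ∈ G.incEdges v, -c ^ k = ∑ f ∈ G.incEdges v, ∏ w ∈ f, x w := by
    rw [← h.sub_deg_mul_pow hk0 v, sum_const, ← hk.pow_abs (x v), hv, deg, nsmul_eq_mul]
    ring
  exact ((sum_eq_sum_iff_of_le hle).1 hsum e he).symm

lemma eigenEq.abs_eq_of_mem (hk : Even k) (hk0 : 0 < k) (h : G.eigenEq 0 x) (hc0 : 0 < c)
    (hc : ∀ w ∈ G.verts, |x w| ≤ c) {v : V} (hv : |x v| = c) {e : Finset V}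
    (he : e ∈ G.incEdges v) {w : V} (hw : w ∈ e) : |x w| = c := by
  have heE := (mem_incEdges.1 he).1
  refine eq_of_prod_eq_pow_card hc0 (fun _ _ => abs_nonneg _)
    (fun w hw => hc w (mem_verts_of_mem heE hw)) ?_ hw
  rw [← abs_prod, h.prod_eq_neg_pow hk hk0 hc hv he, abs_neg, G.uniform e heE,
    abs_of_pos (pow_pos hc0 k)]

theorem oddBipartite_of_eigenEq_zero (hk : Even k) (hk0 : 0 < k) (hconn : G.Connected)
    (h : G.eigenEq 0 x) {u : V} (hu : u ∈ G.verts) (hxu : x u ≠ 0) : G.OddBipartite := by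
  obtain ⟨v₀, hv₀, hmax⟩ := exists_max_image G.verts (fun v => |x v|) ⟨u, hu⟩
  have hc0 : 0 < |x v₀| := (abs_pos.2 hxu).trans_le (hmax u hu)
  have hreach v (hr : Relation.ReflTransGen G.Adj v₀ v) : |x v| = |x v₀| := by
    induction hr with
    | refl => rfl
    | tail _ hadj ih =>
      obtain ⟨e, he, hbe, hce⟩ := hadj
      exact h.abs_eq_of_mem hk hk0 hc0 hmax ih (mem_incEdges.2 ⟨he, hbe⟩) hce
  refine ⟨univ.filter fun v => x v < 0, fun e he => ?_⟩
  obtain ⟨w, hw⟩ := card_pos.1 ((G.uniform e he).symm ▸ hk0)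
  have hneg : ∏ v ∈ e, x v < 0 := by
    rw [h.prod_eq_neg_pow hk hk0 hmax (hreach w (hconn.2 v₀ hv₀ w (mem_verts_of_mem he hw)))
      (mem_incEdges.2 ⟨he, hw⟩)]
    exact neg_neg_of_pos (pow_pos hc0 k)
  rw [inter_filter, inter_univ]
  exact odd_card_filter_neg_of_prod_neg hneg

lemma OddBipartite.exists_sign (hk : Even k) {H : UHG V k} (hH : H.OddBipartite) (u : V) :
    ∃ σ : V → ℝ, (∀ v, |σ v| = 1) ∧ σ u = 1 ∧ ∀ e ∈ H.edges, ∏ v ∈ e, σ v = -1 := by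
  obtain ⟨U, hU⟩ := hH
  set s : V → ℝ := fun v => if v ∈ U then -1 else 1
  have hs v : |s v| = 1 := by
    simp only [s]
    split_ifs <;> simp
  refine ⟨fun v => s u * s v, fun v => by rw [abs_mul, hs, hs, one_mul], ?_, fun e he => ?_⟩
  · simp only [s]
    split_ifs <;> norm_num
  · rw [prod_mul_distrib, prod_const, H.uniform e he, ← hk.pow_abs, hs, one_pow, one_mul,
      prod_ite_neg_one, filter_mem_eq_inter, (hU e he).neg_one_pow]

lemma Qform_eq_zero_of_prod_eq_neg_one (hk : Even k) (H : UHG V k) {σ : V → ℝ}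
    (hσ : ∀ v, |σ v| = 1) (hprod : ∀ e ∈ H.edges, ∏ v ∈ e, σ v = -1) : H.Qform σ = 0 := by
  refine sum_eq_zero fun e he => ?_
  simp only [← hk.pow_abs (σ _), hσ, one_pow, sum_const, H.uniform e he, hprod e he,
    nsmul_eq_mul]
  ring

end OddBipartite

namespace IsCoalescence

variable {G G₀ H : UHG V k} {u : V}

lemma eq_of_mem_verts (hc : IsCoalescence G G₀ H u) {v : V} (h₀ : v ∈ G₀.verts)
    (h : v ∈ H.verts) : v = u :=
  mem_singleton.1 (hc.2.2.1 (mem_inter.2 ⟨h₀, h⟩))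

lemma mem_verts (hc : IsCoalescence G G₀ H u) : u ∈ G.verts := by
  obtain ⟨e, he, hue⟩ := mem_biUnion.1 hc.2.2.2.1
  exact mem_verts_of_mem (hc.1 ▸ mem_union_left _ he) hue

lemma exists_mem_verts_not_mem (hk : 1 < k) (hc : IsCoalescence G G₀ H u) :
    ∃ w ∈ H.verts, w ∉ G₀.verts := by
  obtain ⟨e, he, -⟩ := mem_biUnion.1 hc.2.2.2.2
  obtain ⟨w, hwe, hwu⟩ := exists_mem_ne ((H.uniform e he).symm ▸ hk) u
  have hwH := mem_verts_of_mem he hwe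
  exact ⟨w, hwH, fun h₀ => hwu (hc.eq_of_mem_verts h₀ hwH)⟩

lemma verts_inter_edge (hc : IsCoalescence G G₀ H u) {e : Finset V} (he : e ∈ H.edges) :
    G₀.verts ∩ e = if u ∈ e then {u} else ∅ := by
  ext v
  have hv : v ∈ G₀.verts → v ∈ e → v = u := fun h₀ hv =>
    hc.eq_of_mem_verts h₀ (mem_verts_of_mem he hv)
  split_ifs with hue
  · simp only [mem_inter, mem_singleton]
    exact ⟨fun ⟨h₀, hve⟩ => hv h₀ hve, by rintro rfl; exact ⟨hc.2.2.2.1, hue⟩⟩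
  · simp only [mem_inter, notMem_empty, iff_false, not_and]
    exact fun h₀ hve => hue (hv h₀ hve ▸ hve)

lemma eigenEq_mul_sum_pow_verts (hk0 : 0 < k) (hc : IsCoalescence G G₀ H u) {lam : ℝ}
    {x : V → ℝ} (h : G.eigenEq lam x) :
    lam * ∑ v ∈ G₀.verts, x v ^ k = G₀.Qform x + H.beta u x := by
  rw [h.mul_sum_pow hk0, hc.1, sum_union hc.2.1]
  congr 1
  · refine sum_congr rfl fun e he => ?_
    rw [inter_eq_right.2 fun v hv => mem_verts_of_mem he hv, G₀.uniform e he]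
  · calc ∑ e ∈ H.edges, (∑ v ∈ G₀.verts ∩ e, x v ^ k + #(G₀.verts ∩ e) * ∏ w ∈ e, x w)
        = ∑ e ∈ H.edges, if u ∈ e then x u ^ k + ∏ w ∈ e, x w else 0 :=
          sum_congr rfl fun e he => by rw [hc.verts_inter_edge he]; split_ifs <;> simp
      _ = H.beta u x := by
          rw [← sum_filter, sum_add_distrib, sum_const, nsmul_eq_mul]
          rfl

lemma exists_Qform_eq_of_oddBipartite (hk : Even k) (hk0 : 0 < k) (hc : IsCoalescence G G₀ H u)
    (hH : H.OddBipartite) (x : V → ℝ) :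
    ∃ y : V → ℝ, G.Qform y = G₀.Qform x ∧ ∑ v ∈ G₀.verts, x v ^ k + x u ^ k ≤ ∑ v, y v ^ k := by
  obtain ⟨σ, hσ, hσu, hprod⟩ := hH.exists_sign hk u
  obtain ⟨w, hwH, hwG₀⟩ := hc.exists_mem_verts_not_mem (by obtain ⟨m, rfl⟩ := hk; omega)
  set y : V → ℝ := fun v => if v ∈ G₀.verts then x v else x u * σ v
  have hyG₀ : ∀ v ∈ G₀.verts, y v = x v := fun v hv => if_pos hv
  have hyH : ∀ v ∈ H.verts, y v = x u * σ v := fun v hv => by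
    by_cases h₀ : v ∈ G₀.verts
    · rw [hyG₀ v h₀, hc.eq_of_mem_verts h₀ hv, hσu, mul_one]
    · exact if_neg h₀
  refine ⟨y, ?_, ?_⟩
  · rw [Qform_eq_add_of_edges_eq_union hc.1 hc.2.1, Qform_congr hyG₀, Qform_congr hyH, Qform_smul,
      Qform_eq_zero_of_prod_eq_neg_one hk H hσ hprod, mul_zero, add_zero]
  · have hyw : y w ^ k = x u ^ k := by
      rw [hyH w hwH, mul_pow, ← hk.pow_abs (σ w), hσ, one_pow, mul_one]
    have hsumG₀ : ∑ v ∈ G₀.verts, y v ^ k = ∑ v ∈ G₀.verts, x v ^ k :=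
      sum_congr rfl fun v hv => by rw [hyG₀ v hv]
    rw [← sum_add_sum_compl G₀.verts, hsumG₀, ← hyw]
    gcongr
    exact single_le_sum (f := fun v => y v ^ k) (fun v _ => hk.pow_nonneg _) (mem_compl.2 hwG₀)

theorem beta_le (hk : Even k) (hk0 : 0 < k) (hc : IsCoalescence G G₀ H u) (hH : H.OddBipartite)
    {x : V → ℝ} (hx : G.IsFirstEigenvector x) : H.beta u x ≤ -(G.lamMin * x u ^ k) := by
  obtain ⟨y, hQy, hy⟩ := hc.exists_Qform_eq_of_oddBipartite hk hk0 hH x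
  have hsum := hc.eigenEq_mul_sum_pow_verts hk0 hx.2
  have hRayleigh := G.lamMin_mul_sum_pow_le_Qform hk hk0 y
  have hlam := hx.2.nonneg hk hk0 hx.1
  linarith [mul_le_mul_of_nonneg_left hy hlam]

end IsCoalescence

end UHG

/-- Let `G = G₀(u) ⋄ H(u)` be a connected non-odd-bipartite `k`-uniform
hypergraph (`k` even) with `H` odd-bipartite, and let `x` be a first eigenvector of `G`.
With `β_H(x) = d_H(u) x_u^k + ∑_{e ∈ E_H(u)} ∏_{v ∈ e} x_v`, we have `β_H(x) ≤ 0`;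
moreover if `x_u ≠ 0` then `β_H(x) < 0`. -/
theorem stmt13 {V : Type} [DecidableEq V] [Fintype V] {k : ℕ}
    (hk : Even k) (hk0 : 0 < k) (G G₀ H : UHG V k) (u : V)
    (hcoal : UHG.IsCoalescence G G₀ H u) (hH : H.OddBipartite)
    (hconn : G.Connected) (hnob : ¬ G.OddBipartite)
    (x : V → ℝ) (hx : G.IsFirstEigenvector x) :
    (H.deg u : ℝ) * x u ^ k + (∑ e ∈ H.incEdges u, ∏ v ∈ e, x v) ≤ 0 ∧
      (x u ≠ 0 → (H.deg u : ℝ) * x u ^ k + (∑ e ∈ H.incEdges u, ∏ v ∈ e, x v) < 0) := by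
  have hbeta := hcoal.beta_le hk hk0 hH hx
  have hlam : 0 ≤ G.lamMin := hx.2.nonneg hk hk0 hx.1
  refine ⟨hbeta.trans (neg_nonpos.2 (mul_nonneg hlam (hk.pow_nonneg _))), fun hxu => ?_⟩
  have hlam_pos : 0 < G.lamMin := hlam.lt_of_ne fun h0 =>
    hnob (UHG.oddBipartite_of_eigenEq_zero hk hk0 hconn (h0 ▸ hx.2) hcoal.mem_verts hxu)
  exact hbeta.trans_lt (neg_neg_of_pos (mul_pos hlam_pos (hk.pow_pos hxu)))
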